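/- Situation S2 forces a strict Lyapunov decrease: under Assumption 1 and the γ/α setup, suppose at time k that m(k+1) = m(k) and there is an edge (i,j) of G with x_i(k) ≥ m(k) + 2 (i.e. i ∈ X5(k) ∪ X6(k)) and m(k) + 1 ≤ x_j(k) ≤ m(k) + 1 + α_j (i.e. j ∈ X3(k)). Then V(k+1) − V(k) ≤ −min{γ, δ}, where δ = min over edges (p,q) of G of w_pq. -/

import Mathlib

open Finset Filter

/-- Assumption 1 on the weight matrix `W` relative to the graph `G`:
symmetric, nonnegative, rows sum to 1, diagonally dominant (`w_ii > 1/2`),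
respects the communication graph, and rational weights in `(0,1)` on edges. -/
def Assumption1 {n : ℕ} (G : SimpleGraph (Fin n)) (W : Matrix (Fin n) (Fin n) ℝ) : Prop :=
  (∀ i j, W i j = W j i) ∧
  (∀ i j, 0 ≤ W i j) ∧
  (∀ i, ∑ j, W i j = 1) ∧
  (∀ i, 1 / 2 < W i i) ∧
  (∀ i j, i ≠ j → ¬G.Adj i j → W i j = 0) ∧
  (∀ i j, G.Adj i j → (∃ q : ℚ, (q : ℝ) = W i j) ∧ 0 < W i j ∧ W i j < 1)

/-- The quantized system `x(k+1) = W ⌊x(k)⌋ + x(k) − ⌊x(k)⌋`, componentwise. -/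
def Traj {n : ℕ} (W : Matrix (Fin n) (Fin n) ℝ) (x : ℕ → Fin n → ℝ) : Prop :=
  ∀ k i, x (k + 1) i = (∑ j, W i j * (⌊x k j⌋ : ℝ)) + x k i - (⌊x k i⌋ : ℝ)

/-- `m(k) = min_i ⌊x_i(k)⌋`. -/
noncomputable def mfun {n : ℕ} (hn : 0 < n) (x : ℕ → Fin n → ℝ) (k : ℕ) : ℤ :=
  Finset.univ.inf' ⟨⟨0, hn⟩, Finset.mem_univ _⟩ fun i => ⌊x k i⌋

/-- `M(k) = max_i ⌊x_i(k)⌋`. -/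
noncomputable def Mfun {n : ℕ} (hn : 0 < n) (x : ℕ → Fin n → ℝ) (k : ℕ) : ℤ :=
  Finset.univ.sup' ⟨⟨0, hn⟩, Finset.mem_univ _⟩ fun i => ⌊x k i⌋

/-- The γ gap conditions (fractional part `c_i(k) = x_i(k) − ⌊x_i(k)⌋`). -/
def GammaSetup {n : ℕ} (W : Matrix (Fin n) (Fin n) ℝ) (x : ℕ → Fin n → ℝ) (γ : ℝ) : Prop :=
  0 < γ ∧
  ∀ i k,
    (x k i - (⌊x k i⌋ : ℝ) > 1 - W i i → x k i - (⌊x k i⌋ : ℝ) - (1 - W i i) ≥ 2 * γ) ∧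
    (1 - (x k i - (⌊x k i⌋ : ℝ)) > 1 - W i i →
      1 - (x k i - (⌊x k i⌋ : ℝ)) - (1 - W i i) ≥ 2 * γ) ∧
    1 - (x k i - (⌊x k i⌋ : ℝ)) ≥ 2 * γ ∧
    1 / 2 - (1 - W i i) ≥ 2 * γ

/-- `α_i = 1 − w_ii + γ`. -/
noncomputable def alpha {n : ℕ} (W : Matrix (Fin n) (Fin n) ℝ) (γ : ℝ) (i : Fin n) : ℝ :=
  1 - W i i + γ

/-- The Lyapunov function `V(k) = Σ_i max{|x_i(k) − m(k) − 1| − α_i, 0}`. -/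
noncomputable def Vfun {n : ℕ} (hn : 0 < n) (W : Matrix (Fin n) (Fin n) ℝ) (γ : ℝ)
    (x : ℕ → Fin n → ℝ) (k : ℕ) : ℝ :=
  ∑ i, max (|x k i - (mfun hn x k : ℝ) - 1| - alpha W γ i) 0

/-- `δ = min_{(p,q) ∈ E} w_pq`. -/
noncomputable def deltaMin {n : ℕ} (G : SimpleGraph (Fin n)) (W : Matrix (Fin n) (Fin n) ℝ) : ℝ :=
  sInf {r : ℝ | ∃ p q, G.Adj p q ∧ r = W p q}

open Classical in
/-- `T_s(k0,k)`: number of times `t ∈ [k0,k]` at which node `s` lies in `X1 ∪ X2`,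
i.e. `x_s(t) < m(t) + 1`. -/
noncomputable def Tcount {n : ℕ} (hn : 0 < n) (x : ℕ → Fin n → ℝ) (s : Fin n)
    (k0 k : ℕ) : ℕ :=
  ((Finset.Icc k0 k).filter fun t => x t s < (mfun hn x t : ℝ) + 1).card

/-!
Write `t_p = x_p(k) - m - 1`, `u_p = x_p(k+1) - x_p(k) = Σ_q w_pq (⌊x_q⌋ - ⌊x_p⌋)` and
`ψ_α(t) = max (|t| - α) 0`. Symmetry of `W` gives `Σ_p u_p = 0`, so
`V(k+1) - V(k) = Σ_p (ψ(t_p + u_p) - ψ(t_p) - u_p)`, and `t ↦ ψ(t) - t` is nonincreasing with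
slope `≤ -1` left of `α` and `≥ -1` right of `-α`. Hence the summand of `p` is at most
`Σ_q w_pq (ℓ_q - ℓ_p)`, with `ℓ` the indicator of the lowest level `⌊x⌋ = m`: a node at level `m`
is pulled up by at least the weight linking it to higher nodes, and a node at level `m + 1` is
pushed down by at most the weight linking it to level `m`; a node two or more levels up starts in
the flat part `t > α` and, because `α_p ≤ w_pp`, ends at most its weight to level `m` below
`α_p`. These bounds sum to zero again. The neighbour `i` of `j`, two levels up, pulls `x_j` up by
a further `w_ji`, and the γ-gap leaves room `γ` before `α_j`, which gives the extra
`-min γ w_ji ≤ -min γ δ`.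
-/

section DeadZone

noncomputable def deadZone (α t : ℝ) : ℝ := max (|t| - α) 0

theorem deadZone_add_sub_le_neg_of_neg {α t u K : ℝ} (ht : t < 0) (hu : 0 ≤ u) (hKu : K ≤ u)
    (hKα : K ≤ α) : deadZone α (t + u) - deadZone α t - u ≤ -K := by
  unfold deadZone
  simp only [abs, max_def]
  split_ifs <;> linarith

theorem deadZone_add_sub_le {α t u K : ℝ} (hs : -α ≤ t + u) (h₁ : min α t - (t + u) ≤ K)
    (h₂ : min α t - α ≤ K) : deadZone α (t + u) - deadZone α t - u ≤ K := by
  unfold deadZone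
  rw [min_def] at h₁ h₂
  simp only [abs, max_def]
  split_ifs at h₁ h₂ ⊢ <;> linarith

end DeadZone

section Inflow

variable {ι : Type*} [Fintype ι] {W : Matrix ι ι ℝ} {y : ι → ℝ} {p : ι}

variable (W) in
def inflow (y : ι → ℝ) (p : ι) : ℝ := ∑ q, W p q * (y q - y p)

theorem sum_inflow_eq_zero (hW : ∀ p q, W p q = W q p) (y : ι → ℝ) :
    ∑ p, inflow W y p = 0 := by
  have hswap : ∑ p, ∑ q, W p q * y q = ∑ p, ∑ q, W p q * y p := by
    rw [sum_comm]
    exact sum_congr rfl fun p _ => sum_congr rfl fun q _ => by rw [hW]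
  simp only [inflow, mul_sub, sum_sub_distrib, hswap, sub_self]

theorem inflow_add (y z : ι → ℝ) (p : ι) :
    inflow W (y + z) p = inflow W y p + inflow W z p := by
  simp only [inflow, Pi.add_apply, ← sum_add_distrib]
  exact sum_congr rfl fun q _ => by ring

theorem inflow_eq_sum_sub (hrow : ∑ q, W p q = 1) (y : ι → ℝ) :
    inflow W y p = ∑ q, W p q * y q - y p := by
  simp only [inflow, mul_sub, sum_sub_distrib, ← sum_mul, hrow, one_mul]

theorem inflow_nonneg (hnn : ∀ q, 0 ≤ W p q) (h : ∀ q, y p ≤ y q) : 0 ≤ inflow W y p :=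
  sum_nonneg fun q _ => mul_nonneg (hnn q) (sub_nonneg.mpr (h q))

theorem mul_sub_le_inflow (hnn : ∀ q, 0 ≤ W p q) (h : ∀ q, y p ≤ y q) (q : ι) :
    W p q * (y q - y p) ≤ inflow W y p :=
  single_le_sum (fun q _ => mul_nonneg (hnn q) (sub_nonneg.mpr (h q))) (mem_univ q)

theorem inflow_le_one_sub_mul [DecidableEq ι] (hnn : ∀ q, 0 ≤ W p q) (hrow : ∑ q, W p q = 1)
    {c : ℝ} (h : ∀ q, y q - y p ≤ c) : inflow W y p ≤ (1 - W p p) * c := by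
  have hoff : ∑ q ∈ univ.erase p, W p q = 1 - W p p := by
    rw [← hrow, ← add_sum_erase univ (W p) (mem_univ p)]; ring
  calc inflow W y p = ∑ q ∈ univ.erase p, W p q * (y q - y p) :=
        (sum_erase univ (by simp)).symm
    _ ≤ ∑ q ∈ univ.erase p, W p q * c :=
        sum_le_sum fun q _ => mul_le_mul_of_nonneg_left (h q) (hnn q)
    _ = (1 - W p p) * c := by rw [← sum_mul, hoff]

theorem neg_inflow_le_one_sub_mul [DecidableEq ι] (hnn : ∀ q, 0 ≤ W p q) (hrow : ∑ q, W p q = 1)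
    {c : ℝ} (h : ∀ q, y p - y q ≤ c) : -inflow W y p ≤ (1 - W p p) * c := by
  have hneg : -inflow W y p = inflow W (-y) p := by
    simp only [inflow, Pi.neg_apply, ← sum_neg_distrib]
    exact sum_congr rfl fun q _ => by ring
  rw [hneg]
  exact inflow_le_one_sub_mul hnn hrow fun q => by simp only [Pi.neg_apply]; linarith [h q]

end Inflow

section FloorLevels

variable {ι : Type*} {x : ι → ℝ} {m : ℤ}

noncomputable def floorVec (x : ι → ℝ) : ι → ℝ := fun q => ⌊x q⌋

noncomputable def atFloor (m : ℤ) (x : ι → ℝ) : ι → ℝ :=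
  fun q => if ⌊x q⌋ = m then 1 else 0

theorem atFloor_nonneg (q : ι) : 0 ≤ atFloor m x q := by
  unfold atFloor; split_ifs <;> norm_num

theorem atFloor_le_one (q : ι) : atFloor m x q ≤ 1 := by
  unfold atFloor; split_ifs <;> norm_num

theorem add_one_le_floorVec_add_atFloor (hmin : ∀ q, m ≤ ⌊x q⌋) (q : ι) :
    (m : ℝ) + 1 ≤ (floorVec x + atFloor m x) q := by
  simp only [Pi.add_apply, floorVec, atFloor]
  split_ifs with h
  · rw [h]
  · have : m + 1 ≤ ⌊x q⌋ := lt_of_le_of_ne (hmin q) (Ne.symm h)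
    simpa using (Int.cast_le (R := ℝ)).mpr this

end FloorLevels

section NodeEstimates

variable {ι : Type*} [Fintype ι] [DecidableEq ι] {W : Matrix ι ι ℝ} {x : ι → ℝ} {m : ℤ}
  {p : ι} {α : ℝ}

theorem deadZone_step_le_of_floor_eq (hnn : ∀ q, 0 ≤ W p q) (hrow : ∑ q, W p q = 1)
    (hmin : ∀ q, m ≤ ⌊x q⌋) (hp : ⌊x p⌋ = m) (hα : 1 - W p p ≤ α) :
    deadZone α (x p - m - 1 + inflow W (floorVec x) p) - deadZone α (x p - m - 1)
      - inflow W (floorVec x) p ≤ inflow W (atFloor m x) p := by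
  have hℓp : atFloor m x p = 1 := if_pos hp
  have ht : x p - m - 1 < 0 := by
    have := Int.lt_floor_add_one (x p)
    rw [hp] at this
    linarith
  have hu : 0 ≤ inflow W (floorVec x) p :=
    inflow_nonneg hnn fun q => by simpa [floorVec, hp] using hmin q
  have hKu : -inflow W (atFloor m x) p ≤ inflow W (floorVec x) p := by
    have := inflow_nonneg hnn (y := floorVec x + atFloor m x) fun q => by
      simpa [floorVec, hp, hℓp] using add_one_le_floorVec_add_atFloor hmin q
    rw [inflow_add] at this
    linarith
  have hKα : -inflow W (atFloor m x) p ≤ α := by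
    have := neg_inflow_le_one_sub_mul hnn hrow (y := atFloor m x) (c := 1) fun q => by
      rw [hℓp]
      linarith [atFloor_nonneg (m := m) (x := x) q]
    linarith
  simpa using deadZone_add_sub_le_neg_of_neg ht hu hKu hKα

theorem deadZone_step_le_of_floor_ne (hnn : ∀ q, 0 ≤ W p q) (hrow : ∑ q, W p q = 1)
    (hmin : ∀ q, m ≤ ⌊x q⌋) (hp : ⌊x p⌋ ≠ m) (hα₁ : 1 - W p p ≤ α) (hα₂ : α ≤ W p p) :
    deadZone α (x p - m - 1 + inflow W (floorVec x) p) - deadZone α (x p - m - 1)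
      - inflow W (floorVec x) p ≤ inflow W (atFloor m x) p := by
  have hℓp : atFloor m x p = 0 := if_neg hp
  have hp₁ : m + 1 ≤ ⌊x p⌋ := lt_of_le_of_ne (hmin p) (Ne.symm hp)
  set D : ℝ := ⌊x p⌋ - m - 1 with hD_def
  have hD : 0 ≤ D := by
    have : ((m + 1 : ℤ) : ℝ) ≤ ⌊x p⌋ := Int.cast_le.mpr hp₁
    push_cast at this
    linarith
  have ht : D ≤ x p - m - 1 := by linarith [Int.floor_le (x p)]
  have hK₀ : 0 ≤ inflow W (atFloor m x) p :=
    inflow_nonneg hnn fun q => hℓp ▸ atFloor_nonneg q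
  have hK₁ : inflow W (atFloor m x) p ≤ 1 - W p p := by
    simpa using inflow_le_one_sub_mul hnn hrow (y := atFloor m x) (c := 1) fun q => by
      rw [hℓp]
      linarith [atFloor_le_one (m := m) (x := x) q]
  have hu : -inflow W (floorVec x) p - inflow W (atFloor m x) p ≤ (1 - W p p) * D := by
    have := neg_inflow_le_one_sub_mul hnn hrow (y := floorVec x + atFloor m x) (c := D)
      fun q => by
        have := add_one_le_floorVec_add_atFloor hmin q
        simp only [Pi.add_apply, floorVec, hℓp] at this ⊢
        linarith
    rw [inflow_add] at this
    linarith
  have hwD : 0 ≤ W p p * D := mul_nonneg (hnn p) hD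
  apply deadZone_add_sub_le
  · linarith
  · rcases eq_or_lt_of_le hp₁ with h | h
    · have : D = 0 := by rw [hD_def, ← h]; push_cast; ring
      nlinarith [min_le_right α (x p - m - 1)]
    · have : (1 : ℝ) ≤ D := by
        have : ((m + 2 : ℤ) : ℝ) ≤ ⌊x p⌋ := Int.cast_le.mpr (by omega)
        push_cast at this
        linarith
      nlinarith [min_le_left α (x p - m - 1), hnn p]
  · linarith [min_le_left α (x p - m - 1)]

theorem deadZone_step_le_sub_of_floor_eq_succ {i : ι} {μ : ℝ} (hnn : ∀ q, 0 ≤ W p q)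
    (hrow : ∑ q, W p q = 1) (hmin : ∀ q, m ≤ ⌊x q⌋) (hp : ⌊x p⌋ = m + 1) (hi : m + 2 ≤ ⌊x i⌋)
    (hα : 1 - W p p ≤ α) (ht : x p - m - 1 + μ ≤ α) (hμ : μ ≤ W p i) :
    deadZone α (x p - m - 1 + inflow W (floorVec x) p) - deadZone α (x p - m - 1)
      - inflow W (floorVec x) p ≤ inflow W (atFloor m x) p - μ := by
  have hℓp : atFloor m x p = 0 := if_neg (by omega)
  have ht₀ : 0 ≤ x p - m - 1 := by
    have := Int.floor_le (x p)
    rw [hp] at this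
    push_cast at this
    linarith
  have hK₀ : 0 ≤ inflow W (atFloor m x) p :=
    inflow_nonneg hnn fun q => hℓp ▸ atFloor_nonneg q
  have hK₁ : inflow W (atFloor m x) p ≤ 1 - W p p := by
    simpa using inflow_le_one_sub_mul hnn hrow (y := atFloor m x) (c := 1) fun q => by
      rw [hℓp]
      linarith [atFloor_le_one (m := m) (x := x) q]
  have hlevel : ∀ q, (floorVec x + atFloor m x) p ≤ (floorVec x + atFloor m x) q := by
    intro q
    have := add_one_le_floorVec_add_atFloor hmin q
    simpa [floorVec, hℓp, hp] using this
  have hu : W p i ≤ inflow W (floorVec x) p + inflow W (atFloor m x) p := by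
    rw [← inflow_add]
    refine le_trans ?_ (mul_sub_le_inflow hnn hlevel i)
    refine le_mul_of_one_le_right (hnn i) ?_
    have : ((m + 2 : ℤ) : ℝ) ≤ ⌊x i⌋ := Int.cast_le.mpr hi
    simp only [Pi.add_apply, floorVec, hℓp, hp]
    push_cast at this ⊢
    linarith [atFloor_nonneg (m := m) (x := x) i]
  apply deadZone_add_sub_le
  · linarith [hnn i]
  · linarith [min_le_right α (x p - m - 1)]
  · linarith [min_le_right α (x p - m - 1)]

end NodeEstimates

section Trajectory

variable {n : ℕ} {W : Matrix (Fin n) (Fin n) ℝ} {x : ℕ → Fin n → ℝ} {γ : ℝ}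

theorem Traj.succ_apply (hx : Traj W x) (hrow : ∀ p, ∑ q, W p q = 1) (k : ℕ) (p : Fin n) :
    x (k + 1) p = x k p + inflow W (floorVec (x k)) p := by
  rw [hx, inflow_eq_sum_sub (hrow p)]
  simp only [floorVec]
  ring

theorem mfun_le_floor (hn : 0 < n) (k : ℕ) (p : Fin n) : mfun hn x k ≤ ⌊x k p⌋ :=
  inf'_le _ (mem_univ p)

theorem Vfun_succ_sub_Vfun (hn : 0 < n) (hx : Traj W x) (hsym : ∀ p q, W p q = W q p)
    (hrow : ∀ p, ∑ q, W p q = 1) {k : ℕ} (hm : mfun hn x (k + 1) = mfun hn x k) :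
    Vfun hn W γ x (k + 1) - Vfun hn W γ x k =
      ∑ p, (deadZone (alpha W γ p) (x k p - mfun hn x k - 1 + inflow W (floorVec (x k)) p)
        - deadZone (alpha W γ p) (x k p - mfun hn x k - 1) - inflow W (floorVec (x k)) p) := by
  rw [sum_sub_distrib, sum_inflow_eq_zero hsym, sub_zero, Vfun, Vfun, hm, ← sum_sub_distrib]
  refine sum_congr rfl fun p _ => ?_
  rw [hx.succ_apply hrow, deadZone, deadZone]
  ring_nf

theorem GammaSetup.alpha_bounds (hγ : GammaSetup W x γ) (k : ℕ) (p : Fin n) :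
    1 - W p p ≤ alpha W γ p ∧ alpha W γ p ≤ W p p := by
  have := (hγ.2 p k).2.2.2
  constructor <;> simp only [alpha] <;> linarith [hγ.1]

theorem GammaSetup.floor_eq_and_add_le_alpha (hγ : GammaSetup W x γ) {k : ℕ} {j : Fin n}
    {m : ℤ} (h₁ : (m : ℝ) + 1 ≤ x k j) (h₂ : x k j ≤ m + 1 + alpha W γ j) :
    ⌊x k j⌋ = m + 1 ∧ x k j - m - 1 + γ ≤ alpha W γ j := by
  obtain ⟨hγ₀, hgap⟩ := hγ
  obtain ⟨hfrac, -, -, hdiag⟩ := hgap j k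
  simp only [alpha] at h₂ ⊢
  have hfloor : ⌊x k j⌋ = m + 1 := by
    rw [Int.floor_eq_iff]
    push_cast
    exact ⟨h₁, by linarith⟩
  refine ⟨hfloor, ?_⟩
  rw [hfloor] at hfrac
  push_cast at hfrac
  -- a fractional part above `1 - w_jj` would exceed it by `2γ`, overshooting `α_j`
  by_contra hc
  linarith [hfrac (by linarith)]

end Trajectory

theorem deltaMin_le {n : ℕ} {G : SimpleGraph (Fin n)} {W : Matrix (Fin n) (Fin n) ℝ}
    (hnn : ∀ p q, 0 ≤ W p q) {i j : Fin n} (h : G.Adj i j) : deltaMin G W ≤ W i j :=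
  csInf_le ⟨0, by rintro r ⟨p, q, -, rfl⟩; exact hnn p q⟩ ⟨i, j, h, rfl⟩

theorem situation_S2_decrease_general {n : ℕ} (hn : 1 < n)
    (G : SimpleGraph (Fin n))
    (W : Matrix (Fin n) (Fin n) ℝ) (hW : Assumption1 G W)
    (x : ℕ → Fin n → ℝ) (hx : Traj W x)
    (γ : ℝ) (hγ : GammaSetup W x γ)
    (k : ℕ)
    (hm : mfun (Nat.zero_lt_one.trans hn) x (k + 1) = mfun (Nat.zero_lt_one.trans hn) x k)
    (i j : Fin n) (hadj : G.Adj i j)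
    (hi : (mfun (Nat.zero_lt_one.trans hn) x k : ℝ) + 2 ≤ x k i)
    (hj1 : (mfun (Nat.zero_lt_one.trans hn) x k : ℝ) + 1 ≤ x k j)
    (hj2 : x k j ≤ (mfun (Nat.zero_lt_one.trans hn) x k : ℝ) + 1 + alpha W γ j) :
    Vfun (Nat.zero_lt_one.trans hn) W γ x (k + 1) -
      Vfun (Nat.zero_lt_one.trans hn) W γ x k ≤ -min γ (deltaMin G W) := by
  obtain ⟨hsym, hnn, hrow, -, -, -⟩ := hW
  set m := mfun (Nat.zero_lt_one.trans hn) x k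
  set u := inflow W (floorVec (x k))
  set μ := min γ (W j i)
  have hmin : ∀ q, m ≤ ⌊x k q⌋ := mfun_le_floor _ k
  have hα := hγ.alpha_bounds k
  have hfi : m + 2 ≤ ⌊x k i⌋ := Int.le_floor.mpr (by push_cast; exact hi)
  obtain ⟨hfj, htj⟩ := hγ.floor_eq_and_add_le_alpha hj1 hj2
  have hnode : ∀ p, deadZone (alpha W γ p) (x k p - m - 1 + u p)
      - deadZone (alpha W γ p) (x k p - m - 1) - u p
        ≤ inflow W (atFloor m (x k)) p - if p = j then μ else 0 := by
    intro p
    rcases eq_or_ne p j with rfl | hpj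
    · rw [if_pos rfl]
      exact deadZone_step_le_sub_of_floor_eq_succ (hnn p) (hrow p) hmin hfj hfi (hα p).1
        (by linarith [min_le_left γ (W p i)]) (min_le_right _ _)
    rw [if_neg hpj, sub_zero]
    by_cases hp : ⌊x k p⌋ = m
    · exact deadZone_step_le_of_floor_eq (hnn p) (hrow p) hmin hp (hα p).1
    · exact deadZone_step_le_of_floor_ne (hnn p) (hrow p) hmin hp (hα p).1 (hα p).2
  calc _ = _ := Vfun_succ_sub_Vfun (γ := γ) _ hx hsym hrow hm
    _ ≤ _ := sum_le_sum fun p _ => hnode p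
    _ = -μ := by simp [sum_sub_distrib, sum_inflow_eq_zero hsym]
    _ ≤ -min γ (deltaMin G W) := neg_le_neg (min_le_min_left γ (hsym i j ▸ deltaMin_le hnn hadj))

/-- Situation S2: an edge between a node in `X5 ∪ X6` and a node in `X3`
forces a strict Lyapunov decrease of at least `min{γ, δ}`. -/
theorem situation_S2_decrease {n : ℕ} (hn : 1 < n)
    (G : SimpleGraph (Fin n)) (hG : G.Connected)
    (W : Matrix (Fin n) (Fin n) ℝ) (hW : Assumption1 G W)
    (x : ℕ → Fin n → ℝ) (hx : Traj W x)
    (γ : ℝ) (hγ : GammaSetup W x γ)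
    (k : ℕ)
    (hm : mfun (Nat.zero_lt_one.trans hn) x (k + 1) = mfun (Nat.zero_lt_one.trans hn) x k)
    (i j : Fin n) (hadj : G.Adj i j)
    (hi : (mfun (Nat.zero_lt_one.trans hn) x k : ℝ) + 2 ≤ x k i)
    (hj1 : (mfun (Nat.zero_lt_one.trans hn) x k : ℝ) + 1 ≤ x k j)
    (hj2 : x k j ≤ (mfun (Nat.zero_lt_one.trans hn) x k : ℝ) + 1 + alpha W γ j) :
    Vfun (Nat.zero_lt_one.trans hn) W γ x (k + 1) -
      Vfun (Nat.zero_lt_one.trans hn) W γ x k ≤ -min γ (deltaMin G W) :=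
  situation_S2_decrease_general hn G W hW x hx γ hγ k hm i j hadj hi hj1 hj2
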